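/- arXiv:2502.11152 — 5 statements merged into one kernel-verified Lean document; each statement's English description precedes it below -/
import Mathlib

section
/- Let a > 0, let Σ be an n×n real diagonal matrix, and let Q be an n×n orthogonal matrix. If the spectral norm of Σ − aI is at most a/2, then ‖QΣ² − Σ²Q‖_F ≥ a·‖QΣ − ΣQ‖_F. -/
/-! Write `S = diagonal d`. The `(i, j)` entries of the two commutators are `Q i j * (d j - d i)`
and `Q i j * (d j ^ 2 - d i ^ 2) = Q i j * (d j - d i) * (d i + d j)`. Every entry of a matrix is
bounded by its spectral norm, so `|d i - a| ≤ a / 2` and hence `d i + d j ≥ a`: the inequality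
already holds entry by entry. -/

open Matrix
/-- Frobenius norm of a real matrix. -/
noncomputable def frob {m n : Type*} [Fintype m] [Fintype n] (A : Matrix m n ℝ) : ℝ :=
  Real.sqrt (∑ i, ∑ j, (A i j) ^ 2)

/-- Spectral (operator ℓ²→ℓ²) norm of a real matrix. -/
noncomputable def spec {m n : Type*} [Fintype m] [Fintype n] [DecidableEq n] (A : Matrix m n ℝ) : ℝ :=
  ‖LinearMap.toContinuousLinearMap (Matrix.toEuclideanLin A)‖

theorem abs_apply_le_spec {m n : Type*} [Fintype m] [Fintype n] [DecidableEq n]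
    (A : Matrix m n ℝ) (i : m) (j : n) : |A i j| ≤ spec A := by
  set L := LinearMap.toContinuousLinearMap (toEuclideanLin A)
  have hcol : L (EuclideanSpace.single j 1) i = A i j := by simp [L]
  calc |A i j| = ‖L (EuclideanSpace.single j 1) i‖ := by rw [hcol, Real.norm_eq_abs]
    _ ≤ ‖L (EuclideanSpace.single j 1)‖ := PiLp.norm_apply_le _ _
    _ ≤ ‖L‖ * ‖(EuclideanSpace.single j 1 : EuclideanSpace ℝ n)‖ := L.le_opNorm _
    _ = spec A := by simp [spec, L]

theorem mul_frob_le_frob_of_mul_abs_le {m n : Type*} [Fintype m] [Fintype n]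
    {A B : Matrix m n ℝ} {c : ℝ} (hc : 0 ≤ c) (h : ∀ i j, c * |A i j| ≤ |B i j|) :
    c * frob A ≤ frob B := by
  have hsq : ∀ i j, c ^ 2 * A i j ^ 2 ≤ B i j ^ 2 := fun i j => by
    simpa [mul_pow, sq_abs] using pow_le_pow_left₀ (by positivity) (h i j) 2
  calc c * frob A = Real.sqrt (∑ i, ∑ j, c ^ 2 * A i j ^ 2) := by
        simp_rw [← Finset.mul_sum]
        rw [frob, Real.sqrt_mul (sq_nonneg c), Real.sqrt_sq hc]
    _ ≤ frob B :=
        Real.sqrt_le_sqrt (Finset.sum_le_sum fun i _ => Finset.sum_le_sum fun j _ => hsq i j)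

theorem mul_diagonal_sub_diagonal_mul_apply {n R : Type*} [Fintype n] [DecidableEq n] [CommRing R]
    (Q : Matrix n n R) (d : n → R) (i j : n) :
    (Q * diagonal d - diagonal d * Q) i j = Q i j * (d j - d i) := by
  simp only [Matrix.sub_apply, mul_diagonal, diagonal_mul]; ring

theorem stmt0_general (n : ℕ) (a : ℝ) (ha : 0 < a)
    (S Q : Matrix (Fin n) (Fin n) ℝ) (hS : S.IsDiag)
    (hnear : spec (S - a • (1 : Matrix (Fin n) (Fin n) ℝ)) ≤ a / 2) :
    frob (Q * S ^ 2 - S ^ 2 * Q) ≥ a * frob (Q * S - S * Q) := by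
  set d := S.diag
  have hd : S = diagonal d := hS.diagonal_diag.symm
  have hclose : ∀ i, |d i - a| ≤ a / 2 := fun i => by
    simpa [hd] using (abs_apply_le_spec _ i i).trans hnear
  have ha_le_add : ∀ i j, a ≤ d i + d j := fun i j => by
    linarith [(abs_le.mp (hclose i)).1, (abs_le.mp (hclose j)).1]
  rw [hd, diagonal_pow]
  refine mul_frob_le_frob_of_mul_abs_le ha.le fun i j => ?_
  rw [mul_diagonal_sub_diagonal_mul_apply, mul_diagonal_sub_diagonal_mul_apply]
  calc a * |Q i j * (d j - d i)| ≤ |Q i j * (d j - d i)| * |d i + d j| := by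
        rw [mul_comm, abs_of_nonneg (ha.le.trans (ha_le_add i j))]
        exact mul_le_mul_of_nonneg_left (ha_le_add i j) (abs_nonneg _)
    _ = |Q i j * ((d ^ 2) j - (d ^ 2) i)| := by
        rw [← abs_mul]; congr 1; simp only [Pi.pow_apply]; ring

/-- if `Σ` is diagonal, `Q` orthogonal and `‖Σ − aI‖ ≤ a/2` with `a > 0`,
then `‖QΣ² − Σ²Q‖_F ≥ a‖QΣ − ΣQ‖_F`. -/
theorem stmt0 (n : ℕ) (a : ℝ) (ha : 0 < a)
    (S Q : Matrix (Fin n) (Fin n) ℝ) (hS : S.IsDiag) (hQ : Qᵀ * Q = 1)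
    (hnear : spec (S - a • (1 : Matrix (Fin n) (Fin n) ℝ)) ≤ a / 2) :
    frob (Q * S ^ 2 - S ^ 2 * Q) ≥ a * frob (Q * S - S * Q) :=
  stmt0_general n a ha S Q hS hnear
end

section
/- Let G(W₁,...,W_L) = ‖W_L⋯W₁ − √λ Y‖_F² + λΣ_{l=1}^L ‖W_l‖_F², where λ = Π_{l=1}^L λ_l with all λ_l > 0, and F(W₁,...,W_L) = ‖W_L⋯W₁ − Y‖_F² + Σ_{l=1}^L λ_l‖W_l‖_F². Then (W₁,...,W_L) is a critical point of F (i.e., ∇F = 0) if and only if (√λ₁ W₁,...,√λ_L W_L) is a critical point of G. -/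
open Matrix

/-- Reindexing cast of a rectangular matrix along equalities of dimensions. -/
def mcast {a b c e : ℕ} (h1 : a = c) (h2 : b = e) (M : Matrix (Fin a) (Fin b) ℝ) :
    Matrix (Fin c) (Fin e) ℝ :=
  Matrix.submatrix M (Fin.cast h1.symm) (Fin.cast h2.symm)

/-- `chain d W i k = W_{i+k-1} * ⋯ * W_{i+1} * W_i` (so `k` consecutive factors starting
at layer `i`; the empty product is the identity). -/
noncomputable def chain (d : ℕ → ℕ) (W : ∀ l : ℕ, Matrix (Fin (d (l + 1))) (Fin (d l)) ℝ)
    (i : ℕ) : (k : ℕ) → Matrix (Fin (d (i + k))) (Fin (d i)) ℝ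
  | 0 => (1 : Matrix (Fin (d i)) (Fin (d i)) ℝ)
  | k + 1 => W (i + k) * chain d W i k

/-- The gradient with respect to the `j`-th weight (0-based) of the loss
`‖W_{L:1} − c·Y‖_F² + ∑_l reg_l ‖W_l‖_F²`, namely
`2·W_{L:j+2}ᵀ (W_{L:1} − c Y) W_{j:1}ᵀ + 2 reg_j W_j`. -/
noncomputable def gradReg (d : ℕ → ℕ) (L : ℕ)
    (W : ∀ l : ℕ, Matrix (Fin (d (l + 1))) (Fin (d l)) ℝ)
    (reg : ℕ → ℝ) (c : ℝ) (Y : Matrix (Fin (d L)) (Fin (d 0)) ℝ)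
    (j : ℕ) (hj : j < L) : Matrix (Fin (d (j + 1))) (Fin (d j)) ℝ :=
  (2 : ℝ) • ((mcast (congrArg d (by omega : j + 1 + (L - 1 - j) = L)) rfl
      (chain d W (j + 1) (L - 1 - j)))ᵀ *
    (mcast (congrArg d (Nat.zero_add L)) rfl (chain d W 0 L) - c • Y) *
    (mcast (congrArg d (Nat.zero_add j)) rfl (chain d W 0 j))ᵀ) + (2 * reg j) • W j

/-- Frobenius norm of the full gradient of the loss above. -/
noncomputable def gradNorm (d : ℕ → ℕ) (L : ℕ)
    (W : ∀ l : ℕ, Matrix (Fin (d (l + 1))) (Fin (d l)) ℝ)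
    (reg : ℕ → ℝ) (c : ℝ) (Y : Matrix (Fin (d L)) (Fin (d 0)) ℝ) : ℝ :=
  Real.sqrt (∑ j : Fin L, (frob (gradReg d L W reg c Y j j.isLt)) ^ 2)

/-- Euclidean (Frobenius) distance from a tuple of weight matrices to a set of such tuples,
measured over the first `L` layers. -/
noncomputable def tdist (d : ℕ → ℕ) (L : ℕ)
    (W : ∀ l : ℕ, Matrix (Fin (d (l + 1))) (Fin (d l)) ℝ)
    (S : Set (∀ l : ℕ, Matrix (Fin (d (l + 1))) (Fin (d l)) ℝ)) : ℝ :=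
  sInf {r : ℝ | ∃ V ∈ S, r = Real.sqrt (∑ j : Fin L, (frob (W j - V j)) ^ 2)}

/-!
Rescaling the layers by `s_l` multiplies every partial product `W_{i+k-1} ⋯ W_i` by
`∏_{i ≤ t < i+k} s_t`. Hence the `j`-th gradient of `G` at `(s_l W_l)_l`, with `s_l = √λ_l`,
is the `j`-th gradient of `F` at `W` times `(∏_{t<j} s_t) · √λ · (∏_{j<t<L} s_t)`: the data
term because `√λ = ∏_t s_t`, the regulariser because `λ s_j = √λ · (∏_{t≠j} s_t) · λ_j`.
That factor is positive, so both gradients vanish together.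
-/

lemma chain_smul (d : ℕ → ℕ) (W : ∀ l : ℕ, Matrix (Fin (d (l + 1))) (Fin (d l)) ℝ)
    (s : ℕ → ℝ) (i k : ℕ) :
    chain d (fun l => s l • W l) i k = (∏ t ∈ Finset.Ico i (i + k), s t) • chain d W i k := by
  induction k with
  | zero => simp [chain]
  | succ k ih =>
    have hprod : ∏ t ∈ Finset.Ico i (i + (k + 1)), s t =
        (∏ t ∈ Finset.Ico i (i + k), s t) * s (i + k) :=
      Finset.prod_Ico_succ_top (Nat.le_add_right i k) s
    simp only [chain, ih, hprod, Matrix.smul_mul, Matrix.mul_smul, smul_smul, mul_comm]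

lemma mcast_smul {a b c e : ℕ} (h1 : a = c) (h2 : b = e) (r : ℝ)
    (M : Matrix (Fin a) (Fin b) ℝ) : mcast h1 h2 (r • M) = r • mcast h1 h2 M := rfl

lemma gradReg_smul (d : ℕ → ℕ) (L : ℕ) (W : ∀ l : ℕ, Matrix (Fin (d (l + 1))) (Fin (d l)) ℝ)
    (s : ℕ → ℝ) (c : ℝ) (Y : Matrix (Fin (d L)) (Fin (d 0)) ℝ) (j : ℕ) (hj : j < L) :
    gradReg d L (fun l => s l • W l) (fun _ => (∏ t ∈ Finset.range L, s t) ^ 2)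
        ((∏ t ∈ Finset.range L, s t) * c) Y j hj =
      ((∏ t ∈ Finset.range j, s t) * (∏ t ∈ Finset.range L, s t) *
          ∏ t ∈ Finset.Ico (j + 1) L, s t) • gradReg d L W (fun l => s l ^ 2) c Y j hj := by
  have hsplit : (∏ t ∈ Finset.range j, s t) * s j * ∏ t ∈ Finset.Ico (j + 1) L, s t =
      ∏ t ∈ Finset.range L, s t := by
    rw [← Finset.prod_range_succ, Finset.prod_range_mul_prod_Ico s hj]
  have hlen : j + 1 + (L - 1 - j) = L := by omega
  simp only [gradReg, chain_smul, mcast_smul, Matrix.transpose_smul, zero_add, hlen,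
    ← Finset.range_eq_Ico]
  rw [← smul_smul, ← smul_sub]
  simp only [Matrix.smul_mul, Matrix.mul_smul, smul_smul, smul_add]
  congr 2
  · ring
  · rw [← hsplit]
    ring

theorem stmt6_general (L : ℕ) (d : ℕ → ℕ) (lam : ℕ → ℝ) (hlam : ∀ l, 0 < lam l)
    (Y : Matrix (Fin (d L)) (Fin (d 0)) ℝ)
    (W : ∀ l : ℕ, Matrix (Fin (d (l + 1))) (Fin (d l)) ℝ) :
    (∀ (j : ℕ) (hj : j < L), gradReg d L W lam 1 Y j hj = 0) ↔
    (∀ (j : ℕ) (hj : j < L),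
      gradReg d L (fun l => Real.sqrt (lam l) • W l)
        (fun _ => ∏ l ∈ Finset.range L, lam l)
        (Real.sqrt (∏ l ∈ Finset.range L, lam l)) Y j hj = 0) := by
  set s : ℕ → ℝ := fun l => Real.sqrt (lam l)
  have hs_sq : (fun l => s l ^ 2) = lam := funext fun l => Real.sq_sqrt (hlam l).le
  have hprod : ∏ l ∈ Finset.range L, lam l = (∏ l ∈ Finset.range L, s l) ^ 2 := by
    rw [← Finset.prod_pow, ← hs_sq]
  have hsqrt : Real.sqrt (∏ l ∈ Finset.range L, lam l) = (∏ l ∈ Finset.range L, s l) * 1 := by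
    rw [mul_one, Real.sqrt_prod _ fun l _ => (hlam l).le]
  have hprod_pos (S : Finset ℕ) : 0 < ∏ t ∈ S, s t :=
    Finset.prod_pos fun t _ => Real.sqrt_pos.mpr (hlam t)
  refine forall₂_congr fun j hj => ?_
  have hfactor : (∏ t ∈ Finset.range j, s t) * (∏ t ∈ Finset.range L, s t) *
      ∏ t ∈ Finset.Ico (j + 1) L, s t ≠ 0 :=
    (mul_pos (mul_pos (hprod_pos _) (hprod_pos _)) (hprod_pos _)).ne'
  rw [hsqrt, hprod, gradReg_smul, hs_sq, smul_eq_zero, or_iff_right hfactor]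

/-- `(W₁,…,W_L)` is a critical point of
`F(W) = ‖W_{L:1} − Y‖_F² + ∑_l λ_l‖W_l‖_F²` iff `(√λ₁W₁,…,√λ_LW_L)` is a critical point of
`G(W) = ‖W_{L:1} − √λ Y‖_F² + λ∑_l‖W_l‖_F²`, where `λ = ∏_l λ_l`. -/
theorem stmt6 (L : ℕ) (hL : 2 ≤ L) (d : ℕ → ℕ) (lam : ℕ → ℝ) (hlam : ∀ l, 0 < lam l)
    (Y : Matrix (Fin (d L)) (Fin (d 0)) ℝ)
    (W : ∀ l : ℕ, Matrix (Fin (d (l + 1))) (Fin (d l)) ℝ) :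
    (∀ (j : ℕ) (hj : j < L), gradReg d L W lam 1 Y j hj = 0) ↔
    (∀ (j : ℕ) (hj : j < L),
      gradReg d L (fun l => Real.sqrt (lam l) • W l)
        (fun _ => ∏ l ∈ Finset.range L, lam l)
        (Real.sqrt (∏ l ∈ Finset.range L, lam l)) Y j hj = 0) :=
  stmt6_general L d lam hlam Y W
end

section
/- Let (W₁,...,W_L) ∈ 𝒲_{(σ,Π)} and (W₁',...,W_L') ∈ 𝒲_{(σ',Π')} be critical points of the symmetrized loss G with associated sorted singular-value vectors σ ≠ σ' in ℝ^{d_min}. Then ‖W − W'‖_F ≥ ‖σ − σ'‖₂ ≥ δ_σ, where δ_σ is the minimum gap between distinct elements of the root set 𝒴 = ∪_i {σ ≥ 0 : σ^{2L−1} + λσ − √λ y_i σ^{L−1} = 0}. -/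
open Matrix

/-- Old Mathlib lemma `Matrix.isHermitian_transpose_mul_self`, removed since. -/
theorem Matrix.isHermitian_transpose_mul_self {α : Type*} {m n : Type*} [CommSemiring α] [StarRing α]
    [TrivialStar α] [Fintype m] (A : Matrix m n α) : (Aᵀ * A).IsHermitian := by
  first
  | (rw [IsHermitian, conjTranspose_eq_transpose_of_trivial]; exact isSymm_transpose_mul_self A)
  | (simp [IsHermitian, conjTranspose_mul, conjTranspose_eq_transpose_of_trivial])

/-- `svals A i` is the `i`-th largest singular value of `A` (0-based), obtained as the
square root of the `i`-th largest eigenvalue of `AᴴA`. -/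
noncomputable def svals {m n : ℕ} (A : Matrix (Fin m) (Fin n) ℝ) (i : Fin n) : ℝ :=
  Real.sqrt ((Matrix.isHermitian_transpose_mul_self A).eigenvalues
    (Tuple.sort (Matrix.isHermitian_transpose_mul_self A).eigenvalues i.rev))

/-
Every layer has the singular values `σ` (padded with zeros), so Mirsky's inequality on the first
layer gives `‖σ - σ'‖₂ ≤ ‖W₀ - W₀'‖_F ≤ ‖W - W'‖_F`. Mirsky's inequality reduces to von Neumann's
trace inequality `tr (Aᵀ B) ≤ ∑ σᵢ(A) σᵢ(B)`: writing `A = ∑ σᵢ uᵢ vᵢᵀ` and `B = ∑ τⱼ pⱼ qⱼᵀ`,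
`tr (Aᵀ B) = ∑ σᵢ τⱼ (uᵢ ⬝ pⱼ) (vᵢ ⬝ qⱼ)`, and by AM-GM and Bessel's inequality the weights
`((uᵢ ⬝ pⱼ)² + (vᵢ ⬝ qⱼ)²) / 2` form a doubly substochastic matrix, against which a sum of products
of two decreasing nonnegative sequences is maximal on the diagonal (Abel summation).
Finally `σ ≠ σ'` differ in some coordinate, where they are two distinct points of `𝒴`.
-/

open Finset

theorem Finset.sum_mul_nonneg_of_antitone_of_prefix_sum_nonneg {ι : Type*} [LinearOrder ι]
    (s : Finset ι) {f z : ι → ℝ} (hf : Antitone f) (hf0 : ∀ i ∈ s, 0 ≤ f i)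
    (hz : ∀ k ∈ s, 0 ≤ ∑ i ∈ s with i ≤ k, z i) :
    0 ≤ ∑ i ∈ s, f i * z i := by
  induction s using Finset.induction_on_max generalizing f with
  | empty => simp
  | insert a t hlt ih =>
    have hat : a ∉ t := fun h => lt_irrefl a (hlt a h)
    -- Split off the constant `f a`; `f - f a` is again antitone and nonnegative on `t`.
    have hsplit : ∑ i ∈ insert a t, f i * z i
        = f a * ∑ i ∈ insert a t, z i + ∑ i ∈ t, (f i - f a) * z i := by
      rw [sum_insert hat, sum_insert hat, mul_add, mul_sum]
      simp only [sub_mul, sum_sub_distrib]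
      ring
    have htotal : 0 ≤ ∑ i ∈ insert a t, z i := by
      have h := hz a (mem_insert_self a t)
      rwa [filter_true_of_mem fun i hi => ?_] at h
      rcases mem_insert.mp hi with rfl | hi
      · exact le_rfl
      · exact (hlt i hi).le
    have hrest : 0 ≤ ∑ i ∈ t, (f i - f a) * z i := by
      refine ih (fun i j hij => sub_le_sub_right (hf hij) _)
        (fun i hi => sub_nonneg.mpr (hf (hlt i hi).le)) fun k hk => ?_
      have h := hz k (mem_insert_of_mem hk)
      rwa [filter_insert, if_neg (not_le.mpr (hlt k hk))] at h
    rw [hsplit]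
    exact add_nonneg (mul_nonneg (hf0 a (mem_insert_self a t)) htotal) hrest

def DoublySubstochastic {ι : Type*} [Fintype ι] (D : ι → ι → ℝ) : Prop :=
  (∀ i j, 0 ≤ D i j) ∧ (∀ i, ∑ j, D i j ≤ 1) ∧ ∀ j, ∑ i, D i j ≤ 1

namespace DoublySubstochastic

variable {ι : Type*} [Fintype ι] [LinearOrder ι] {D : ι → ι → ℝ}

theorem sum_Iic_sum_Iic_le (hD : DoublySubstochastic D) (k l : ι) :
    ∑ j with j ≤ l, ∑ i with i ≤ k, D i j ≤ ∑ j with j ≤ l, if j ≤ k then 1 else 0 := by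
  obtain ⟨hD0, hrow, hcol⟩ := hD
  rcases le_total k l with hkl | hlk
  · calc ∑ j with j ≤ l, ∑ i with i ≤ k, D i j
        ≤ ∑ i with i ≤ k, ∑ j, D i j := by
          rw [sum_comm]
          exact sum_le_sum fun i _ => sum_le_sum_of_subset_of_nonneg (subset_univ _)
            fun j _ _ => hD0 i j
      _ ≤ ∑ i with i ≤ k, 1 := sum_le_sum fun i _ => hrow i
      _ = ∑ j with j ≤ l, if j ≤ k then 1 else 0 := by
          rw [← sum_filter, filter_filter]
          congr 1
          ext j
          simp only [mem_filter, mem_univ, true_and]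
          exact ⟨fun h => ⟨h.trans hkl, h⟩, And.right⟩
  · calc ∑ j with j ≤ l, ∑ i with i ≤ k, D i j
        ≤ ∑ j with j ≤ l, ∑ i, D i j :=
          sum_le_sum fun j _ => sum_le_sum_of_subset_of_nonneg (subset_univ _)
            fun i _ _ => hD0 i j
      _ ≤ ∑ j with j ≤ l, 1 := sum_le_sum fun j _ => hcol j
      _ = ∑ j with j ≤ l, if j ≤ k then 1 else 0 :=
          sum_congr rfl fun j hj => (if_pos ((mem_filter.mp hj).2.trans hlk)).symm

theorem sum_sum_mul_le_sum_mul (hD : DoublySubstochastic D) {f g : ι → ℝ}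
    (hf : Antitone f) (hg : Antitone g) (hf0 : ∀ i, 0 ≤ f i) (hg0 : ∀ i, 0 ≤ g i) :
    ∑ i, ∑ j, D i j * (f i * g j) ≤ ∑ i, f i * g i := by
  have hinner : ∀ k, ∑ i with i ≤ k, ∑ j, D i j * g j ≤ ∑ i with i ≤ k, g i := by
    intro k
    have h := sum_mul_nonneg_of_antitone_of_prefix_sum_nonneg univ hg (fun j _ => hg0 j)
      (z := fun j => (if j ≤ k then 1 else 0) - ∑ i with i ≤ k, D i j)
      fun l _ => by
        rw [sum_sub_distrib]
        exact sub_nonneg.mpr (hD.sum_Iic_sum_Iic_le k l)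
    simp only [mul_sub, sum_sub_distrib, mul_ite, mul_one, mul_zero, ← sum_filter,
      sub_nonneg, mul_sum] at h
    rw [sum_comm]
    simpa only [mul_comm] using h
  have h := sum_mul_nonneg_of_antitone_of_prefix_sum_nonneg univ hf (fun i _ => hf0 i)
    (z := fun i => g i - ∑ j, D i j * g j)
    fun k _ => by
      rw [sum_sub_distrib]
      exact sub_nonneg.mpr (hinner k)
  simp only [mul_sub, sum_sub_distrib, sub_nonneg, mul_sum] at h
  simpa only [mul_left_comm] using h

end DoublySubstochastic

def SubOrthonormal {ι κ : Type*} [Fintype κ] (u : ι → κ → ℝ) : Prop :=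
  Pairwise (fun i j => u i ⬝ᵥ u j = 0) ∧ ∀ i, u i ⬝ᵥ u i ≤ 1

theorem SubOrthonormal.sum_dotProduct_sq_le {ι κ : Type*} [Fintype ι] [Fintype κ]
    {p : ι → κ → ℝ} (hp : SubOrthonormal p) (x : κ → ℝ) :
    ∑ j, (x ⬝ᵥ p j) ^ 2 ≤ x ⬝ᵥ x := by
  set c : ι → ℝ := fun j => x ⬝ᵥ p j
  set s : κ → ℝ := ∑ j, c j • p j
  have hxs : x ⬝ᵥ s = ∑ j, c j ^ 2 := by
    simp only [s, dotProduct_sum, dotProduct_smul, smul_eq_mul, c, sq]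
  have hss : s ⬝ᵥ s ≤ ∑ j, c j ^ 2 := by
    have hdiag : s ⬝ᵥ s = ∑ j, c j ^ 2 * (p j ⬝ᵥ p j) := by
      simp only [s, sum_dotProduct, dotProduct_sum, smul_dotProduct, dotProduct_smul,
        smul_eq_mul]
      refine sum_congr rfl fun j _ => ?_
      rw [sum_eq_single j (fun k _ hkj => by simp [hp.1 hkj]) (by simp)]
      ring
    rw [hdiag]
    exact sum_le_sum fun j _ => mul_le_of_le_one_right (sq_nonneg _) (hp.2 j)
  have hnonneg : 0 ≤ (x - s) ⬝ᵥ (x - s) := dotProduct_self_star_nonneg _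
  rw [sub_dotProduct, dotProduct_sub, dotProduct_sub, dotProduct_comm s x, hxs] at hnonneg
  linarith

theorem doublySubstochastic_of_subOrthonormal {ι κ μ : Type*} [Fintype ι] [Fintype κ]
    [Fintype μ] {u p : ι → κ → ℝ} {v q : ι → μ → ℝ} (hu : SubOrthonormal u)
    (hp : SubOrthonormal p) (hv : SubOrthonormal v) (hq : SubOrthonormal q) :
    DoublySubstochastic fun i j => ((u i ⬝ᵥ p j) ^ 2 + (v i ⬝ᵥ q j) ^ 2) / 2 := by
  refine ⟨fun i j => by positivity, fun i => ?_, fun j => ?_⟩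
  · rw [← sum_div, sum_add_distrib]
    linarith [hp.sum_dotProduct_sq_le (u i), hq.sum_dotProduct_sq_le (v i), hu.2 i, hv.2 i]
  · simp only [← sum_div, sum_add_distrib, dotProduct_comm (u _), dotProduct_comm (v _)]
    linarith [hu.sum_dotProduct_sq_le (p j), hv.sum_dotProduct_sq_le (q j), hp.2 j, hq.2 j]

theorem trace_transpose_mul_sum_smul_vecMulVec {ι κ μ : Type*} [Fintype ι] [Fintype κ]
    [Fintype μ] (s t : ι → ℝ) (u p : ι → κ → ℝ) (v q : ι → μ → ℝ) :
    ((∑ i, s i • vecMulVec (u i) (v i))ᵀ * ∑ j, t j • vecMulVec (p j) (q j)).trace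
      = ∑ i, ∑ j, s i * t j * ((u i ⬝ᵥ p j) * (v i ⬝ᵥ q j)) := by
  simp only [Matrix.transpose_sum, transpose_smul, transpose_vecMulVec, Matrix.sum_mul,
    Matrix.mul_sum, Matrix.smul_mul, Matrix.mul_smul, vecMulVec_mul_vecMulVec, trace_sum,
    trace_smul, trace_vecMulVec, dotProduct_smul, smul_eq_mul, mul_sum]
  rw [sum_comm]
  exact sum_congr rfl fun i _ => sum_congr rfl fun j _ => by ring

section SingularValues

variable {m n : ℕ}

theorem svals_nonneg (A : Matrix (Fin m) (Fin n) ℝ) (i : Fin n) : 0 ≤ svals A i :=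
  Real.sqrt_nonneg _

theorem svals_antitone (A : Matrix (Fin m) (Fin n) ℝ) : Antitone (svals A) :=
  fun _ _ hij => Real.sqrt_le_sqrt <|
    Tuple.monotone_sort (isHermitian_transpose_mul_self A).eigenvalues (Fin.rev_le_rev.mpr hij)

theorem sq_svals (A : Matrix (Fin m) (Fin n) ℝ) (i : Fin n) :
    svals A i ^ 2 = (isHermitian_transpose_mul_self A).eigenvalues
      (Tuple.sort (isHermitian_transpose_mul_self A).eigenvalues i.rev) :=
  Real.sq_sqrt ((posSemidef_conjTranspose_mul_self A).eigenvalues_nonneg _)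

theorem exists_orthonormal_eigenvectors_transpose_mul_self (A : Matrix (Fin m) (Fin n) ℝ) :
    ∃ v : Fin n → Fin n → ℝ, (∀ i j, v i ⬝ᵥ v j = if i = j then 1 else 0) ∧
      ∑ i, vecMulVec (v i) (v i) = 1 ∧ ∀ i, (Aᵀ * A) *ᵥ v i = svals A i ^ 2 • v i := by
  set hA := isHermitian_transpose_mul_self A
  set e : Equiv.Perm (Fin n) := Fin.revPerm.trans (Tuple.sort hA.eigenvalues)
  refine ⟨fun i => (hA.eigenvectorBasis (e i)).ofLp, fun i j => ?_, ?_, fun i => ?_⟩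
  · have h := orthonormal_iff_ite.mp hA.eigenvectorBasis.orthonormal (e j) (e i)
    simpa [EuclideanSpace.inner_eq_star_dotProduct, e.injective.eq_iff, eq_comm] using h
  · have hU := mem_unitaryGroup_iff.mp hA.eigenvectorUnitary.2
    ext a b
    rw [← hU, Matrix.sum_apply, mul_apply]
    simp only [vecMulVec_apply, star_apply, IsHermitian.eigenvectorUnitary_apply, star_trivial]
    exact Equiv.sum_comp e fun k => (hA.eigenvectorBasis k).ofLp a * (hA.eigenvectorBasis k).ofLp b
  · rw [hA.mulVec_eigenvectorBasis, sq_svals]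
    rfl

theorem exists_svd (A : Matrix (Fin m) (Fin n) ℝ) :
    ∃ (u : Fin n → Fin m → ℝ) (v : Fin n → Fin n → ℝ), SubOrthonormal u ∧ SubOrthonormal v ∧
      A = ∑ i, svals A i • vecMulVec (u i) (v i) := by
  obtain ⟨v, hv, hcomplete, heig⟩ := exists_orthonormal_eigenvectors_transpose_mul_self A
  have hAv : ∀ i j, (A *ᵥ v i) ⬝ᵥ (A *ᵥ v j) = svals A i ^ 2 * (v i ⬝ᵥ v j) := fun i j => by
    rw [dotProduct_mulVec, ← mulVec_transpose, mulVec_mulVec, heig, smul_dotProduct, smul_eq_mul]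
  -- The junk value `0⁻¹ = 0` makes `u i = 0` exactly when `svals A i = 0`.
  set u : Fin n → Fin m → ℝ := fun i => (svals A i)⁻¹ • A *ᵥ v i
  have hAvu : ∀ i, A *ᵥ v i = svals A i • u i := fun i => by
    by_cases h : svals A i = 0
    · have : A *ᵥ v i = 0 := dotProduct_self_eq_zero.mp (by rw [hAv, h]; ring)
      simp [u, h, this]
    · simp [u, smul_inv_smul₀ h]
  refine ⟨u, v, ⟨fun i j hij => ?_, fun i => ?_⟩, ⟨fun i j hij => ?_, fun i => ?_⟩, ?_⟩
  · simp [u, hAv, hv, hij]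
  · by_cases h : svals A i = 0
    · simp [u, h]
    · simp only [u, smul_dotProduct, dotProduct_smul, hAv, hv, if_pos, smul_eq_mul]
      field_simp
      exact le_rfl
  · simp [hv, hij]
  · simp [hv]
  · calc A = A * ∑ i, vecMulVec (v i) (v i) := by rw [hcomplete, Matrix.mul_one]
      _ = ∑ i, svals A i • vecMulVec (u i) (v i) := by
          simp only [Matrix.mul_sum, mul_vecMulVec, hAvu, smul_vecMulVec]

/-- Von Neumann's trace inequality. -/
theorem trace_transpose_mul_le_sum_svals_mul (A B : Matrix (Fin m) (Fin n) ℝ) :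
    (Aᵀ * B).trace ≤ ∑ i, svals A i * svals B i := by
  obtain ⟨u, v, hu, hv, hA⟩ := exists_svd A
  obtain ⟨p, q, hp, hq, hB⟩ := exists_svd B
  have hD := doublySubstochastic_of_subOrthonormal hu hp hv hq
  calc (Aᵀ * B).trace
      = ∑ i, ∑ j, svals A i * svals B j * ((u i ⬝ᵥ p j) * (v i ⬝ᵥ q j)) := by
        conv_lhs => rw [hA, hB]
        exact trace_transpose_mul_sum_smul_vecMulVec _ _ u p v q
    _ ≤ ∑ i, ∑ j, ((u i ⬝ᵥ p j) ^ 2 + (v i ⬝ᵥ q j) ^ 2) / 2 * (svals A i * svals B j) := by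
        refine sum_le_sum fun i _ => sum_le_sum fun j _ => ?_
        rw [mul_comm _ (svals A i * svals B j)]
        exact mul_le_mul_of_nonneg_left
          (by linarith [two_mul_le_add_sq (u i ⬝ᵥ p j) (v i ⬝ᵥ q j)])
          (mul_nonneg (svals_nonneg A i) (svals_nonneg B j))
    _ ≤ ∑ i, svals A i * svals B i :=
        hD.sum_sum_mul_le_sum_mul (svals_antitone A) (svals_antitone B) (svals_nonneg A)
          (svals_nonneg B)

theorem sum_sq_svals (A : Matrix (Fin m) (Fin n) ℝ) : ∑ i, svals A i ^ 2 = (Aᵀ * A).trace := by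
  obtain ⟨v, hv, hcomplete, heig⟩ := exists_orthonormal_eigenvectors_transpose_mul_self A
  calc ∑ i, svals A i ^ 2 = ((Aᵀ * A) * ∑ i, vecMulVec (v i) (v i)).trace := by
        simp only [Matrix.mul_sum, mul_vecMulVec, trace_sum, trace_vecMulVec, heig,
          smul_dotProduct, hv, if_pos, smul_eq_mul, mul_one]
    _ = (Aᵀ * A).trace := by rw [hcomplete, Matrix.mul_one]

theorem sq_frob {k l : Type*} [Fintype k] [Fintype l] (M : Matrix k l ℝ) :
    frob M ^ 2 = (Mᵀ * M).trace := by
  rw [frob, Real.sq_sqrt (by positivity), trace, sum_comm]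
  simp only [diag_apply, mul_apply, transpose_apply, sq]

/-- Mirsky's inequality for the Frobenius norm. -/
theorem sum_sq_svals_sub_le_sq_frob_sub (A B : Matrix (Fin m) (Fin n) ℝ) :
    ∑ i, (svals A i - svals B i) ^ 2 ≤ frob (A - B) ^ 2 := by
  have hexpand : ∑ i, (svals A i - svals B i) ^ 2
      = ∑ i, svals A i ^ 2 - 2 * ∑ i, svals A i * svals B i + ∑ i, svals B i ^ 2 := by
    simp only [sub_sq, sum_add_distrib, sum_sub_distrib, mul_sum, mul_assoc]
  have hcross : (Bᵀ * A).trace = (Aᵀ * B).trace := by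
    rw [← trace_transpose, transpose_mul, transpose_transpose]
  rw [hexpand, sq_frob, sum_sq_svals, sum_sq_svals, transpose_sub, Matrix.sub_mul, Matrix.mul_sub,
    Matrix.mul_sub, trace_sub, trace_sub, trace_sub, hcross]
  linarith [trace_transpose_mul_le_sum_svals_mul A B]

end SingularValues

theorem Fin.sum_dite_lt {M : Type*} [AddCommMonoid M] {n N : ℕ} (h : n ≤ N) (F : Fin n → M) :
    ∑ j : Fin N, (if hj : (j : ℕ) < n then F ⟨j, hj⟩ else 0) = ∑ i, F i := by
  set G : ℕ → M := fun k => if hk : k < n then F ⟨k, hk⟩ else 0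
  rw [Fin.sum_univ_eq_sum_range G, ← sum_range_add_sum_Ico G h,
    sum_eq_zero fun k hk => dif_neg (mem_Ico.mp hk).1.not_gt, add_zero,
    ← Fin.sum_univ_eq_sum_range G]
  exact sum_congr rfl fun i _ => dif_pos i.isLt

theorem stmt9_general (L : ℕ) (hL : 2 ≤ L)
    (dmin : ℕ)
    (Yset : Set ℝ)
    (δσ : ℝ) (hδ : δσ = sInf {t : ℝ | ∃ a ∈ Yset, ∃ b ∈ Yset, a ≠ b ∧ t = |a - b|})
    (σ σ' : Fin dmin → ℝ)
    (hσY : ∀ i, σ i ∈ Yset) (hσ'Y : ∀ i, σ' i ∈ Yset) (hne : σ ≠ σ')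
    (d : ℕ → ℕ) (hdim : ∀ l, dmin ≤ d l)
    (W W' : ∀ l : ℕ, Matrix (Fin (d (l + 1))) (Fin (d l)) ℝ)
    (hWs : ∀ l < L, ∀ j : Fin (d l),
      svals (W l) j = if h : (j : ℕ) < dmin then σ ⟨j, h⟩ else 0)
    (hW's : ∀ l < L, ∀ j : Fin (d l),
      svals (W' l) j = if h : (j : ℕ) < dmin then σ' ⟨j, h⟩ else 0) :
    Real.sqrt (∑ l : Fin L, (frob (W l - W' l)) ^ 2)
        ≥ Real.sqrt (∑ i, (σ i - σ' i) ^ 2)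
    ∧ Real.sqrt (∑ i, (σ i - σ' i) ^ 2) ≥ δσ := by
  have hL0 : 0 < L := by omega
  have hsvals : ∑ i, (σ i - σ' i) ^ 2 = ∑ j, (svals (W 0) j - svals (W' 0) j) ^ 2 := by
    rw [← Fin.sum_dite_lt (hdim 0)]
    refine sum_congr rfl fun j _ => ?_
    rw [hWs 0 hL0, hW's 0 hL0]
    split_ifs <;> simp
  refine ⟨Real.sqrt_le_sqrt ?_, ?_⟩
  · calc ∑ i, (σ i - σ' i) ^ 2 ≤ frob (W 0 - W' 0) ^ 2 :=
          hsvals ▸ sum_sq_svals_sub_le_sq_frob_sub _ _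
      _ ≤ ∑ l : Fin L, frob (W l - W' l) ^ 2 :=
          single_le_sum (f := fun l : Fin L => frob (W l - W' l) ^ 2) (fun _ _ => sq_nonneg _)
            (mem_univ ⟨0, hL0⟩)
  · obtain ⟨i, hi⟩ := Function.ne_iff.mp hne
    have hbdd : BddBelow {t : ℝ | ∃ a ∈ Yset, ∃ b ∈ Yset, a ≠ b ∧ t = |a - b|} :=
      ⟨0, fun _ ⟨_, _, _, _, _, ht⟩ => ht ▸ abs_nonneg _⟩
    calc δσ ≤ |σ i - σ' i| := hδ ▸ csInf_le hbdd ⟨σ i, hσY i, σ' i, hσ'Y i, hi, rfl⟩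
      _ ≤ Real.sqrt (∑ i, (σ i - σ' i) ^ 2) :=
          Real.abs_le_sqrt (single_le_sum (fun j _ => sq_nonneg (σ j - σ' j)) (mem_univ i))

/-- let `W, W'` be critical points of the symmetrized loss whose layers have
singular values given by the sorted vectors `σ ≠ σ'` (padded with zeros), each entry lying
in the root set `𝒴 = ∪_i {s ≥ 0 : s^{2L−1} + λs − √λ y_i s^{L−1} = 0}`.  Then
`‖W − W'‖_F ≥ ‖σ − σ'‖₂ ≥ δ_σ`, where `δ_σ` is the minimum gap between distinct elements
of `𝒴`. -/
theorem stmt9 (L : ℕ) (hL : 2 ≤ L) (lam : ℝ) (hlam : 0 < lam)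
    (dmin : ℕ) (y : Fin dmin → ℝ)
    (Yset : Set ℝ)
    (hYset : Yset = {s : ℝ | 0 ≤ s ∧ ∃ i : Fin dmin,
      s ^ (2 * L - 1) + lam * s - Real.sqrt lam * y i * s ^ (L - 1) = 0})
    (δσ : ℝ) (hδ : δσ = sInf {t : ℝ | ∃ a ∈ Yset, ∃ b ∈ Yset, a ≠ b ∧ t = |a - b|})
    (σ σ' : Fin dmin → ℝ)
    (hsort : Antitone σ) (hsort' : Antitone σ')
    (hσY : ∀ i, σ i ∈ Yset) (hσ'Y : ∀ i, σ' i ∈ Yset) (hne : σ ≠ σ')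
    (d : ℕ → ℕ) (hdim : ∀ l, dmin ≤ d l)
    (W W' : ∀ l : ℕ, Matrix (Fin (d (l + 1))) (Fin (d l)) ℝ)
    (hWs : ∀ l < L, ∀ j : Fin (d l),
      svals (W l) j = if h : (j : ℕ) < dmin then σ ⟨j, h⟩ else 0)
    (hW's : ∀ l < L, ∀ j : Fin (d l),
      svals (W' l) j = if h : (j : ℕ) < dmin then σ' ⟨j, h⟩ else 0) :
    Real.sqrt (∑ l : Fin L, (frob (W l - W' l)) ^ 2)
        ≥ Real.sqrt (∑ i, (σ i - σ' i) ^ 2)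
    ∧ Real.sqrt (∑ i, (σ i - σ' i) ^ 2) ≥ δσ :=
  stmt9_general L hL dmin Yset δσ hδ σ σ' hσY hσ'Y hne d hdim W W' hWs hW's
end

section
/- Under the balancing identity (∇_l G(W)W_lᵀ − W_{l+1}ᵀ∇_{l+1}G(W))/2 = λ(W_lW_lᵀ − W_{l+1}ᵀW_{l+1}), if ‖W_k‖ ≤ (3/2)σ*_max for all k, then ‖W_{l+1}ᵀW_{l+1} − W_lW_lᵀ‖_F ≤ (3√2 σ*_max)/(4λ) · ‖∇G(W)‖_F for each l ∈ [L−1], where ‖∇G(W)‖_F² = Σ_l ‖∇_l G(W)‖_F². -/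
/-!
Solving the balancing identity for `W_{l+1}ᵀW_{l+1} − W_lW_lᵀ` writes it as
`(W_{l+1}ᵀ ∇_{l+1}G − ∇_lG W_lᵀ) / (2λ)`. The Frobenius norm of a product is at most the spectral
norm of one factor times the Frobenius norm of the other, so the spectral bound on the weights
gives `λ‖W_{l+1}ᵀW_{l+1} − W_lW_lᵀ‖_F ≤ (3/4)σ*_max (‖∇_lG‖_F + ‖∇_{l+1}G‖_F)`, and
`a + b ≤ √2 √(a² + b²)` finishes.
-/

open Matrix

section Frobenius

attribute [local instance] Matrix.frobeniusNormedAddCommGroup Matrix.frobeniusNormedSpace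

variable {m n : Type*} [Fintype m] [Fintype n]

lemma frob_eq_norm (A : Matrix m n ℝ) : frob A = ‖A‖ := by
  rw [frob, frobenius_norm_def, Real.sqrt_eq_rpow]
  simp only [Real.norm_eq_abs, Real.rpow_two, sq_abs]

lemma frob_nonneg (A : Matrix m n ℝ) : 0 ≤ frob A := Real.sqrt_nonneg _

lemma frob_sub_le (A B : Matrix m n ℝ) : frob (A - B) ≤ frob A + frob B := by
  simpa only [frob_eq_norm] using norm_sub_le A B

lemma frob_smul (c : ℝ) (A : Matrix m n ℝ) : frob (c • A) = |c| * frob A := by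
  rw [frob_eq_norm, frob_eq_norm, norm_smul, Real.norm_eq_abs]

lemma frob_transpose (A : Matrix m n ℝ) : frob Aᵀ = frob A := by
  rw [frob_eq_norm, frob_eq_norm, frobenius_norm_transpose]

end Frobenius

open scoped Matrix.Norms.L2Operator in
lemma spec_transpose {m n : Type*} [Fintype m] [Fintype n] [DecidableEq m] [DecidableEq n]
    (A : Matrix m n ℝ) : spec Aᵀ = spec A := by
  change ‖Aᵀ‖ = ‖A‖
  rw [← conjTranspose_eq_transpose_of_trivial, l2_opNorm_conjTranspose]

lemma sq_frob_eq_sum_sq_norm_row {m n : Type*} [Fintype m] [Fintype n] (A : Matrix m n ℝ) :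
    frob A ^ 2 = ∑ i, ‖WithLp.toLp 2 (A i)‖ ^ 2 := by
  rw [frob, Real.sq_sqrt (by positivity)]
  simp only [EuclideanSpace.norm_sq_eq, Real.norm_eq_abs, sq_abs]

section SpectralFrobenius

variable {m n p : Type*} [Fintype m] [Fintype n] [Fintype p] [DecidableEq n]

lemma frob_mul_le_frob_mul_spec [DecidableEq p] (A : Matrix m n ℝ) (B : Matrix n p ℝ) :
    frob (A * B) ≤ frob A * spec B := by
  -- row `i` of `A * B` is `Bᵀ` applied to row `i` of `A`
  have hrow (i : m) : ‖WithLp.toLp 2 ((A * B) i)‖ ≤ spec B * ‖WithLp.toLp 2 (A i)‖ := by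
    change ‖WithLp.toLp 2 (A i ᵥ* B)‖ ≤ _
    rw [← spec_transpose B, ← mulVec_transpose]
    exact (LinearMap.toContinuousLinearMap (toEuclideanLin Bᵀ)).le_opNorm (WithLp.toLp 2 (A i))
  have hB : 0 ≤ spec B := norm_nonneg _
  rw [← pow_le_pow_iff_left₀ (frob_nonneg _) (mul_nonneg (frob_nonneg A) hB) two_ne_zero, mul_pow,
    sq_frob_eq_sum_sq_norm_row, sq_frob_eq_sum_sq_norm_row, Finset.sum_mul]
  gcongr with i
  rw [← mul_pow]
  exact pow_le_pow_left₀ (norm_nonneg _) ((hrow i).trans_eq (mul_comm _ _)) 2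

lemma frob_mul_le_spec_mul_frob [DecidableEq m] (A : Matrix m n ℝ) (B : Matrix n p ℝ) :
    frob (A * B) ≤ spec A * frob B := by
  calc frob (A * B) = frob (Bᵀ * Aᵀ) := by rw [← transpose_mul, frob_transpose]
    _ ≤ frob Bᵀ * spec Aᵀ := frob_mul_le_frob_mul_spec _ _
    _ = spec A * frob B := by rw [spec_transpose, frob_transpose, mul_comm]

end SpectralFrobenius

lemma frob_gram_sub_le_of_balanced {m n p : Type*} [Fintype m] [Fintype n] [Fintype p]
    [DecidableEq m] [DecidableEq n] [DecidableEq p] {A G : Matrix m n ℝ} {B G' : Matrix p m ℝ}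
    {lam s : ℝ} (hlam : 0 < lam)
    (hbal : (1 / 2 : ℝ) • (G * Aᵀ - Bᵀ * G') = lam • (A * Aᵀ - Bᵀ * B))
    (hA : spec A ≤ s) (hB : spec B ≤ s) :
    frob (Bᵀ * B - A * Aᵀ) ≤ s / (2 * lam) * (frob G + frob G') := by
  have hbal' : lam • (Bᵀ * B - A * Aᵀ) = (1 / 2 : ℝ) • (Bᵀ * G' - G * Aᵀ) := by
    linear_combination (norm := module) hbal
  have hnorm := congrArg frob hbal'
  rw [frob_smul, frob_smul, abs_of_pos hlam, abs_of_pos one_half_pos] at hnorm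
  have hG : frob (G * Aᵀ) ≤ frob G * s := by
    grw [frob_mul_le_frob_mul_spec, spec_transpose, hA]
    exact frob_nonneg G
  have hG' : frob (Bᵀ * G') ≤ s * frob G' := by
    grw [frob_mul_le_spec_mul_frob, spec_transpose, hB]
    exact frob_nonneg G'
  calc frob (Bᵀ * B - A * Aᵀ)
      = 1 / 2 * frob (Bᵀ * G' - G * Aᵀ) / lam := by rw [← hnorm]; field_simp
    _ ≤ 1 / 2 * (s * frob G' + frob G * s) / lam := by grw [frob_sub_le, hG, hG']
    _ = s / (2 * lam) * (frob G + frob G') := by ring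

lemma add_le_sqrt_two_mul_sqrt_sum_sq {ι : Type*} [Fintype ι] (f : ι → ℝ) {i j : ι}
    (hij : i ≠ j) : f i + f j ≤ √2 * √(∑ k, f k ^ 2) := by
  have hpair : f i ^ 2 + f j ^ 2 ≤ ∑ k, f k ^ 2 :=
    Finset.add_le_sum (fun k _ => sq_nonneg (f k)) (Finset.mem_univ i) (Finset.mem_univ j) hij
  rw [← Real.sqrt_mul zero_le_two]
  apply Real.le_sqrt_of_sq_le
  nlinarith [sq_nonneg (f i - f j)]

/-- under the balancing identity and the spectral bound
`‖W_k‖ ≤ (3/2)σ*_max` for all layers, each consecutive pair of weights is approximately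
balanced: `‖W_{l+1}ᵀW_{l+1} − W_lW_lᵀ‖_F ≤ (3√2σ*_max)/(4λ)·‖∇G(W)‖_F`. -/
theorem stmt12 (L : ℕ) (d : ℕ → ℕ) (lam : ℝ) (hlam : 0 < lam)
    (σmax : ℝ) (hσ : 0 < σmax)
    (Y : Matrix (Fin (d L)) (Fin (d 0)) ℝ)
    (W : ∀ l : ℕ, Matrix (Fin (d (l + 1))) (Fin (d l)) ℝ)
    (hbal : ∀ (j : ℕ) (hj : j + 1 < L),
      ((1 : ℝ) / 2) • (gradReg d L W (fun _ => lam) (Real.sqrt lam) Y j (by omega) * (W j)ᵀ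
          - (W (j + 1))ᵀ * gradReg d L W (fun _ => lam) (Real.sqrt lam) Y (j + 1) hj)
        = lam • (W j * (W j)ᵀ - (W (j + 1))ᵀ * W (j + 1)))
    (hspec : ∀ k < L, spec (W k) ≤ 3 / 2 * σmax) :
    ∀ (j : ℕ), j + 1 < L →
      frob ((W (j + 1))ᵀ * W (j + 1) - W j * (W j)ᵀ)
        ≤ (3 * Real.sqrt 2 * σmax) / (4 * lam)
            * gradNorm d L W (fun _ => lam) (Real.sqrt lam) Y := by
  intro j hj
  have hjL : j < L := by omega
  calc frob ((W (j + 1))ᵀ * W (j + 1) - W j * (W j)ᵀ)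
      ≤ 3 / 2 * σmax / (2 * lam)
          * (frob (gradReg d L W (fun _ => lam) (Real.sqrt lam) Y j hjL)
            + frob (gradReg d L W (fun _ => lam) (Real.sqrt lam) Y (j + 1) hj)) :=
        frob_gram_sub_le_of_balanced hlam (hbal j hj) (hspec j hjL) (hspec (j + 1) hj)
    _ ≤ 3 / 2 * σmax / (2 * lam) * (√2 * gradNorm d L W (fun _ => lam) (Real.sqrt lam) Y) := by
        gcongr
        exact add_le_sqrt_two_mul_sqrt_sum_sq
          (fun k : Fin L => frob (gradReg d L W (fun _ => lam) (Real.sqrt lam) Y k k.isLt))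
          (i := ⟨j, hjL⟩) (j := ⟨j + 1, hj⟩) (by simp [Fin.ext_iff])
    _ = 3 * √2 * σmax / (4 * lam) * gradNorm d L W (fun _ => lam) (Real.sqrt lam) Y := by
        ring
end

section
/- Let H be an n×n orthogonal matrix partitioned into blocks H^{(i,j)} (i,j ∈ [q]) according to a partition of [n], and suppose each diagonal block satisfies ‖H^{(i,i)}‖ ≤ 1. Then for each i, there exists an orthogonal matrix T of the same size as H^{(i,i)} such that ‖H^{(i,i)} − T‖_F² ≤ Σ_{j≠i} ‖H^{(i,j)}‖_F². -/
open Matrix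

theorem OrthonormalBasis.exists_norm_smul_eq_of_pairwise_inner_eq_zero
    {𝕜 E ι : Type*} [RCLike 𝕜] [NormedAddCommGroup E] [InnerProductSpace 𝕜 E]
    [FiniteDimensional 𝕜 E] [Fintype ι] (hcard : Module.finrank 𝕜 E = Fintype.card ι)
    {c : ι → E} (hc : Pairwise fun k l => inner 𝕜 (c k) (c l) = 0) :
    ∃ b : OrthonormalBasis ι 𝕜 E, ∀ k, c k = (‖c k‖ : 𝕜) • b k := by
  classical
  let v : ι → E := fun k => (‖c k‖⁻¹ : 𝕜) • c k
  have hv : Orthonormal 𝕜 ({k | c k ≠ 0}.domRestrict v) := by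
    refine ⟨fun k => norm_smul_inv_norm k.2, fun k l hkl => ?_⟩
    simp only [Set.domRestrict_apply, v, inner_smul_left, inner_smul_right,
      hc (Subtype.coe_ne_coe.mpr hkl), mul_zero]
  obtain ⟨b, hb⟩ := Orthonormal.exists_orthonormalBasis_extension_of_card_eq hcard hv
  refine ⟨b, fun k => ?_⟩
  by_cases hk : c k = 0
  · simp [hk]
  · rw [hb k hk, smul_inv_smul₀ (by simpa using hk)]

section Frobenius

variable {m n : Type*} [Fintype m] [Fintype n]

theorem frob_sq (A : Matrix m n ℝ) : frob A ^ 2 = ∑ i, ∑ j, A i j ^ 2 :=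
  Real.sq_sqrt (by positivity)

theorem frob_sq_eq_trace (A : Matrix m n ℝ) : frob A ^ 2 = trace (Aᵀ * A) := by
  rw [frob_sq, Finset.sum_comm]
  simp [trace, mul_apply, sq]

theorem frob_sq_mul_mul_transpose {l k : Type*} [Fintype l] [Fintype k] [DecidableEq m]
    [DecidableEq n] {V : Matrix l m ℝ} {U : Matrix k n ℝ}
    (hV : Vᵀ * V = 1) (hU : Uᵀ * U = 1) (A : Matrix m n ℝ) :
    frob (V * A * Uᵀ) ^ 2 = frob A ^ 2 := by
  rw [frob_sq_eq_trace, frob_sq_eq_trace]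
  calc trace ((V * A * Uᵀ)ᵀ * (V * A * Uᵀ)) = trace (U * (Aᵀ * (Vᵀ * V) * A) * Uᵀ) := by
        simp only [transpose_mul, transpose_transpose, Matrix.mul_assoc]
    _ = trace (Uᵀ * (U * (Aᵀ * A))) := by rw [hV, Matrix.mul_one, trace_mul_comm]
    _ = trace (Aᵀ * A) := by rw [← Matrix.mul_assoc, hU, Matrix.one_mul]

theorem frob_sq_diagonal [DecidableEq m] (d : m → ℝ) : frob (diagonal d) ^ 2 = ∑ i, d i ^ 2 := by
  rw [frob_sq]
  refine Finset.sum_congr rfl fun i _ => ?_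
  rw [Finset.sum_eq_single i (fun j _ hji => by simp [diagonal_apply_ne _ hji.symm]) (by simp)]
  simp

theorem sum_frob_sq_submatrix_fiber {ι : Type*} [Fintype ι] [DecidableEq ι] (A : Matrix m n ℝ)
    (p : n → ι) : ∑ j, frob (of fun a (b : {x // p x = j}) => A a b.1) ^ 2 = frob A ^ 2 := by
  simp only [frob_sq, of_apply]
  rw [Finset.sum_comm]
  exact Finset.sum_congr rfl fun a _ => Fintype.sum_fiberwise p (fun b => A a b ^ 2)

theorem frob_sq_submatrix_of_mul_transpose_eq_one {k : Type*} [DecidableEq k]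
    {H : Matrix k n ℝ} (hH : H * Hᵀ = 1) (f : m → k) :
    frob (H.submatrix f id) ^ 2 = Fintype.card m := by
  have hrow : ∀ a, ∑ b, H a b ^ 2 = 1 := fun a => by
    simpa [mul_apply, sq] using congrFun (congrFun hH a) a
  simp [frob_sq, hrow]

end Frobenius

section SingularValueDecomposition

variable {m : Type*} [Fintype m]

theorem Matrix.dotProduct_mulVec_mulVec {l : Type*} [Fintype l] (B : Matrix l m ℝ)
    (x y : m → ℝ) :
    (B *ᵥ x) ⬝ᵥ (B *ᵥ y) = x ⬝ᵥ ((Bᵀ * B) *ᵥ y) := by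
  rw [← mulVec_mulVec, dotProduct_mulVec x, vecMul_transpose]

variable [DecidableEq m]

theorem EuclideanSpace.transpose_mul_self_of_orthonormalBasis
    (b : OrthonormalBasis m ℝ (EuclideanSpace ℝ m)) :
    (of fun i k => b k i)ᵀ * (of fun i k => b k i) = 1 :=
  (mem_orthogonalGroup_iff' _ _).mp
    ((EuclideanSpace.basisFun m ℝ).toMatrix_orthonormalBasis_mem_orthogonal b)

theorem Matrix.exists_eq_mul_diagonal_mul_transpose (B : Matrix m m ℝ) :
    ∃ (V U : Matrix m m ℝ) (σ : m → ℝ), Vᵀ * V = 1 ∧ Uᵀ * U = 1 ∧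
      (∀ k, 0 ≤ σ k ∧ σ k ≤ spec B) ∧ B = V * diagonal σ * Uᵀ := by
  have hM : (Bᵀ * B).IsHermitian := by
    simpa using isHermitian_conjTranspose_mul_self B
  let e := hM.eigenvectorBasis
  let c : m → EuclideanSpace ℝ m := fun k => toEuclideanLin B (e k)
  have hc : Pairwise fun k l => inner ℝ (c k) (c l) = 0 := by
    intro k l hkl
    calc inner ℝ (c k) (c l) = (e l : m → ℝ) ⬝ᵥ ((Bᵀ * B) *ᵥ e k) := by
          simp [c, EuclideanSpace.inner_eq_star_dotProduct, dotProduct_mulVec_mulVec]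
      _ = hM.eigenvalues k * inner ℝ (e k) (e l) := by
          rw [hM.mulVec_eigenvectorBasis, dotProduct_smul, EuclideanSpace.inner_eq_star_dotProduct]
          simp [e]
      _ = 0 := by rw [e.orthonormal.2 hkl, mul_zero]
  obtain ⟨b, hb⟩ :=
    OrthonormalBasis.exists_norm_smul_eq_of_pairwise_inner_eq_zero finrank_euclideanSpace hc
  let V : Matrix m m ℝ := of fun i k => b k i
  let U : Matrix m m ℝ := of fun i k => e k i
  have hV : Vᵀ * V = 1 := EuclideanSpace.transpose_mul_self_of_orthonormalBasis b
  have hU : Uᵀ * U = 1 := EuclideanSpace.transpose_mul_self_of_orthonormalBasis e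
  have hBU : B * U = V * diagonal fun k => ‖c k‖ := by
    ext i k
    have hbki : (B *ᵥ e k) i = ‖c k‖ * b k i := congrArg (· i) (hb k)
    rw [mul_diagonal, mul_comm]
    simpa [U, V, mul_apply, mulVec, dotProduct] using hbki
  refine ⟨V, U, fun k => ‖c k‖, hV, hU, fun k => ⟨norm_nonneg _, ?_⟩, ?_⟩
  · have := (LinearMap.toContinuousLinearMap (toEuclideanLin B)).le_opNorm (e k)
    rwa [e.orthonormal.1 k, mul_one] at this
  · rw [← hBU, Matrix.mul_assoc, mul_eq_one_comm.mp hU, Matrix.mul_one]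

end SingularValueDecomposition

/-- let `H` be an `n×n` orthogonal matrix partitioned into blocks
`H^{(i,j)}` according to a partition `p : Fin n → Fin q` of `[n]`, with each diagonal
block of spectral norm at most `1`.  Then for each `i` there exists an orthogonal `T`
of the same size as `H^{(i,i)}` with
`‖H^{(i,i)} − T‖_F² ≤ ∑_{j ≠ i} ‖H^{(i,j)}‖_F²`. -/
theorem stmt16 (n q : ℕ) (H : Matrix (Fin n) (Fin n) ℝ) (hH : Hᵀ * H = 1)
    (p : Fin n → Fin q)
    (hdiag : ∀ i : Fin q,
      spec (Matrix.of fun a b : {x : Fin n // p x = i} => H a.1 b.1) ≤ 1) :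
    ∀ i : Fin q, ∃ T : Matrix {x : Fin n // p x = i} {x : Fin n // p x = i} ℝ,
      Tᵀ * T = 1 ∧
      (frob (Matrix.of (fun a b : {x : Fin n // p x = i} => H a.1 b.1) - T)) ^ 2
        ≤ ∑ j ∈ Finset.univ.erase i,
            (frob (Matrix.of fun (a : {x : Fin n // p x = i}) (b : {x : Fin n // p x = j}) =>
              H a.1 b.1)) ^ 2 := by
  intro i
  obtain ⟨V, U, σ, hV, hU, hσ, hB⟩ :=
    exists_eq_mul_diagonal_mul_transpose (of fun a b : {x : Fin n // p x = i} => H a.1 b.1)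
  refine ⟨V * Uᵀ, ?_, ?_⟩
  · rw [transpose_mul, transpose_transpose, Matrix.mul_assoc, ← Matrix.mul_assoc Vᵀ, hV,
      Matrix.one_mul, mul_eq_one_comm.mp hU]
  have hrow : ∑ j, frob (of fun (a : {x : Fin n // p x = i}) (b : {x : Fin n // p x = j}) =>
      H a.1 b.1) ^ 2 = Fintype.card {x : Fin n // p x = i} :=
    (sum_frob_sq_submatrix_fiber (H.submatrix Subtype.val id) p).trans
      (frob_sq_submatrix_of_mul_transpose_eq_one (mul_eq_one_comm.mp hH) _)
  have hsub : V * diagonal σ * Uᵀ - V * Uᵀ = V * diagonal (fun k => σ k - 1) * Uᵀ := by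
    rw [← diagonal_sub, diagonal_one, Matrix.mul_sub, Matrix.sub_mul, Matrix.mul_one]
  rw [Finset.sum_erase_eq_sub (Finset.mem_univ i), hrow, hB, hsub,
    frob_sq_mul_mul_transpose hV hU, frob_sq_mul_mul_transpose hV hU, frob_sq_diagonal,
    frob_sq_diagonal]
  calc ∑ k, (σ k - 1) ^ 2 ≤ ∑ k, (1 - σ k ^ 2) :=
        Finset.sum_le_sum fun k _ => by
          have hσ_le_one : σ k ≤ 1 := (hσ k).2.trans (hdiag i)
          nlinarith [(hσ k).1]
    _ = Fintype.card {x : Fin n // p x = i} - ∑ k, σ k ^ 2 := by simp [Finset.sum_sub_distrib]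
end
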